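/- arXiv:1604.01152 — 3 statements merged into one kernel-verified Lean document; each statement's English description precedes it below -/
import Mathlib

section
/- Let f, g : ℍ → ℂ be functions on the complex upper half-plane admitting, for every z ∈ ℍ, absolutely convergent expansions f(z) = Σ_{n=1}^∞ a_n exp(2πi n z) and g(z) = Σ_{n=0}^∞ b_n exp(2πi n z) with complex coefficients a_n, b_n. Define f^ρ(z) = conj(f(−conj(z))). Then for every real y > 0, ∫_0^1 conj(f^ρ(x+iy)) · g(x+iy) dx = Σ_{n=1}^∞ a_n b_n exp(−4πny). -/
open Complex UpperHalfPlane Real MeasureTheory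

/-- The point `x + i y` of the upper half-plane, for `y > 0`. -/
noncomputable def mkH (x y : ℝ) (hy : 0 < y) : UpperHalfPlane :=
  UpperHalfPlane.mk (⟨x, y⟩ : ℂ) hy

/-- The point `-conj z` of the upper half-plane, for `z` in the upper half-plane. -/
noncomputable def negConjH (z : UpperHalfPlane) : UpperHalfPlane :=
  UpperHalfPlane.mk (-(starRingEnd ℂ (z : ℂ)))
    (by simpa using z.im_pos)

/-- The function `f^ρ(z) = conj (f (-conj z))`. -/
noncomputable def rhoForm (f : UpperHalfPlane → ℂ) : UpperHalfPlane → ℂ :=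
  fun z => starRingEnd ℂ (f (negConjH z))

/-! At height `y` both expansions are absolutely convergent Fourier series in `x`:
`conj (f^ρ (x + iy)) = f (-x + iy) = Σ aₘ e^{-2πmy} e^{-2πimx}` and
`g (x + iy) = Σ bₙ e^{-2πny} e^{2πinx}`. Their product is an absolutely convergent double
series, so it may be integrated term by term, and orthogonality of the characters `e^{2πikx}` on `[0, 1]`
keeps only the diagonal `m = n`. -/

lemma exp_two_pi_I_mul_add_mul_I (s w : ℂ) (y : ℝ) :
    cexp (2 * π * Complex.I * s * (w + y * Complex.I)) =
      cexp (-(2 * π * s * y)) * cexp (2 * π * Complex.I * s * w) := by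
  rw [← Complex.exp_add]
  congr 1
  linear_combination (2 * π * s * y) * I_sq

lemma integral_exp_two_pi_I_int_mul (k : ℤ) :
    ∫ x in (0 : ℝ)..1, cexp (2 * π * Complex.I * k * x) = if k = 0 then 1 else 0 := by
  split_ifs with hk
  · simp [hk]
  have hc : 2 * π * Complex.I * k ≠ 0 := by simp [Real.pi_ne_zero, hk]
  rw [integral_exp_mul_complex hc]
  have : cexp (2 * π * Complex.I * k) = 1 := by
    simpa [mul_comm] using exp_int_mul_two_pi_mul_I k
  simp [this]

lemma intervalIntegral_tsum_of_norm_le {ι E : Type*} [Countable ι] [NormedAddCommGroup E]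
    [NormedSpace ℝ E] [CompleteSpace E] {F : ι → ℝ → E} {C : ι → ℝ} {a b : ℝ}
    (hF : ∀ i, Continuous (F i)) (hC : Summable C) (hFC : ∀ i x, ‖F i x‖ ≤ C i) :
    ∫ x in a..b, ∑' i, F i x = ∑' i, ∫ x in a..b, F i x :=
  (intervalIntegral.hasSum_integral_of_dominated_convergence (fun i _ => C i)
    (fun i => (hF i).aestronglyMeasurable) (fun i => .of_forall fun x _ => hFC i x)
    (.of_forall fun _ _ => hC) intervalIntegrable_const
    (.of_forall fun x _ => (Summable.of_norm_bounded hC (hFC · x)).hasSum)).tsum_eq.symm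

theorem integral_tsum_mul_tsum_exp (u v : ℕ → ℂ) (k : ℕ) (hu : Summable fun m => ‖u m‖)
    (hv : Summable fun n => ‖v n‖) :
    ∫ x in (0 : ℝ)..1, (∑' m, u m * cexp (2 * π * Complex.I * (m + k) * -x)) *
        ∑' n, v n * cexp (2 * π * Complex.I * n * x)
      = ∑' m, u m * v (m + k) := by
  set F : ℕ × ℕ → ℝ → ℂ := fun p x =>
    u p.1 * v p.2 * cexp (2 * π * Complex.I * ((p.2 - (p.1 + k) : ℤ) : ℂ) * x)
  have hF_norm : ∀ p x, ‖F p x‖ = ‖u p.1 * v p.2‖ := fun p x => by simp [F, norm_exp]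
  have hprod : ∀ x : ℝ, (∑' m, u m * cexp (2 * π * Complex.I * (m + k) * -x)) *
      ∑' n, v n * cexp (2 * π * Complex.I * n * x) = ∑' p, F p x := by
    intro x
    rw [tsum_mul_tsum_of_summable_norm (by simpa [norm_exp] using hu)
      (by simpa [norm_exp] using hv)]
    refine tsum_congr fun p => ?_
    simp only [F, mul_mul_mul_comm, ← Complex.exp_add]
    push_cast
    ring_nf
  have hF_integral : ∀ p : ℕ × ℕ,
      ∫ x in (0 : ℝ)..1, F p x = if p.2 = p.1 + k then u p.1 * v p.2 else 0 := by
    intro p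
    simp only [F, intervalIntegral.integral_const_mul, integral_exp_two_pi_I_int_mul, sub_eq_zero]
    norm_cast
    split_ifs <;> simp
  have hsummable : Summable fun p : ℕ × ℕ => if p.2 = p.1 + k then u p.1 * v p.2 else 0 :=
    Summable.of_norm_bounded (hu.mul_norm hv) fun p => by split_ifs <;> simp [mul_nonneg]
  calc _ = ∫ x in (0 : ℝ)..1, ∑' p, F p x :=
        intervalIntegral.integral_congr fun x _ => hprod x
    _ = ∑' p, ∫ x in (0 : ℝ)..1, F p x :=
      intervalIntegral_tsum_of_norm_le (fun p => by fun_prop) (hu.mul_norm hv)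
        (fun p x => (hF_norm p x).le)
    _ = ∑' m, ∑' n, if n = m + k then u m * v n else 0 := by
      rw [tsum_congr hF_integral, hsummable.tsum_prod' fun m => hsummable.prod_factor m]
    _ = ∑' m, u m * v (m + k) := tsum_congr fun m => tsum_ite_eq _ _

lemma coe_mkH (x y : ℝ) (hy : 0 < y) : (mkH x y hy : ℂ) = x + y * Complex.I :=
  Complex.mk_eq_add_mul_I x y

lemma coe_negConjH (z : ℍ) : (negConjH z : ℂ) = -(starRingEnd ℂ) z := rfl

/-- If `f(z) = Σ_{n≥1} a_n e^{2πinz}` and `g(z) = Σ_{n≥0} b_n e^{2πinz}` are absolutely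
convergent expansions on the upper half-plane, then for every `y > 0`,
`∫_0^1 conj(f^ρ(x+iy)) g(x+iy) dx = Σ_{n≥1} a_n b_n e^{-4πny}`. -/
theorem statement0 (f g : UpperHalfPlane → ℂ) (a b : ℕ → ℂ)
    (hfa : ∀ z : UpperHalfPlane,
      Summable fun n : ℕ => ‖a (n + 1) * Complex.exp (2 * π * Complex.I * (n + 1) * (z : ℂ))‖)
    (hf : ∀ z : UpperHalfPlane,
      f z = ∑' n : ℕ, a (n + 1) * Complex.exp (2 * π * Complex.I * (n + 1) * (z : ℂ)))
    (hgb : ∀ z : UpperHalfPlane,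
      Summable fun n : ℕ => ‖b n * Complex.exp (2 * π * Complex.I * n * (z : ℂ))‖)
    (hg : ∀ z : UpperHalfPlane,
      g z = ∑' n : ℕ, b n * Complex.exp (2 * π * Complex.I * n * (z : ℂ)))
    (y : ℝ) (hy : 0 < y) :
    ∫ x in (0 : ℝ)..1, (starRingEnd ℂ) (rhoForm f (mkH x y hy)) * g (mkH x y hy)
      = ∑' n : ℕ, a (n + 1) * b (n + 1) * Real.exp (-4 * π * (n + 1) * y) := by
  set u : ℕ → ℂ := fun m => a (m + 1) * cexp (-(2 * π * (m + 1) * y))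
  set v : ℕ → ℂ := fun n => b n * cexp (-(2 * π * n * y))
  have hu : Summable fun m => ‖u m‖ := by
    have := hfa (mkH 0 y hy)
    simp only [coe_mkH, exp_two_pi_I_mul_add_mul_I] at this
    simpa [u] using this
  have hv : Summable fun n => ‖v n‖ := by
    have := hgb (mkH 0 y hy)
    simp only [coe_mkH, exp_two_pi_I_mul_add_mul_I] at this
    simpa [v] using this
  have hf_x (x : ℝ) : (starRingEnd ℂ) (rhoForm f (mkH x y hy)) =
      ∑' m, u m * cexp (2 * π * Complex.I * (m + (1 : ℕ)) * -x) := by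
    have : (negConjH (mkH x y hy) : ℂ) = -x + y * Complex.I := by
      simp [coe_negConjH, coe_mkH, add_comm]
    simp only [rhoForm, Complex.conj_conj, hf, this, exp_two_pi_I_mul_add_mul_I]
    simp only [u, mul_assoc, Nat.cast_one]
  have hg_x (x : ℝ) : g (mkH x y hy) = ∑' n, v n * cexp (2 * π * Complex.I * n * x) := by
    simp only [hg, coe_mkH, exp_two_pi_I_mul_add_mul_I]
    simp only [v, mul_assoc]
  calc _ = ∫ x in (0 : ℝ)..1, (∑' m, u m * cexp (2 * π * Complex.I * (m + (1 : ℕ)) * -x)) *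
          ∑' n, v n * cexp (2 * π * Complex.I * n * x) :=
        intervalIntegral.integral_congr fun x _ => by rw [hf_x, hg_x]
    _ = ∑' m, u m * v (m + 1) := integral_tsum_mul_tsum_exp u v 1 hu hv
    _ = _ := tsum_congr fun m => by
        simp only [u, v]
        push_cast
        rw [mul_mul_mul_comm, ← Complex.exp_add]
        ring_nf
end

section
/- Let k, N, d be positive integers, let q be a prime with q ∣ N and gcd(d, q) = 1, and let f be a cusp form of weight k for Γ0(N). Then Tr^{Nd}_{Nd/q}(f∣[k]B_d) = (Tr^N_{N/q}(f))∣[k]B_d, where (f∣[k]B_d)(z) = d^{k/2} f(dz) is a cusp form of weight k for Γ0(Nd) and Tr^N_{N/q}(f) is a cusp form of weight k for Γ0(N/q). -/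
open Complex UpperHalfPlane
open scoped MatrixGroups ModularForm

/-- `f : ℍ → ℂ` is a cusp form of weight `k` for `Γ0(N)`: holomorphic, slash-invariant
under `Γ0(N)`, and `f ∣[k] γ` tends to `0` as `Im z → ∞` for every `γ ∈ SL₂(ℤ)`. -/
def IsCuspForm (N : ℕ) (k : ℤ) (f : UpperHalfPlane → ℂ) : Prop :=
  ∃ F : CuspForm (CongruenceSubgroup.Gamma0 N) k, ⇑F = f

/-- `R` is a finite set of representatives in `Γ0(M)` for the right cosets
`Γ0(N)\Γ0(M)`. -/
def IsGamma0Reps (N M : ℕ) (R : Finset SL(2, ℤ)) : Prop :=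
  (∀ γ ∈ R, γ ∈ CongruenceSubgroup.Gamma0 M) ∧
  ∀ δ : SL(2, ℤ), δ ∈ CongruenceSubgroup.Gamma0 M →
    ∃! γ : SL(2, ℤ), γ ∈ R ∧ δ * γ⁻¹ ∈ CongruenceSubgroup.Gamma0 N

/-- The point `t z` of the upper half-plane, for `t > 0` real. -/
noncomputable def scaleH (t : ℝ) (ht : 0 < t) (z : UpperHalfPlane) : UpperHalfPlane :=
  UpperHalfPlane.mk ((t : ℂ) * (z : ℂ))
    (by rw [Complex.im_ofReal_mul]; exact mul_pos ht z.im_pos)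

/-- The slash of `f` by `B_d = (d 0; 0 1)` in weight `k`: `z ↦ d^{k/2} f(dz)`. -/
noncomputable def slashBd (d : ℕ) (hd : 0 < d) (k : ℕ) (f : UpperHalfPlane → ℂ) :
    UpperHalfPlane → ℂ :=
  fun z => (((d : ℝ) ^ ((k : ℝ) / 2) : ℝ) : ℂ) * f (scaleH (d : ℝ) (by exact_mod_cast hd) z)

/-!
Conjugation by `B_d`, `γ ↦ B_d γ B_d⁻¹ = (a, b d; c / d, e)`, is an isomorphism from `Γ0(d)` onto
the matrices of `SL₂(ℤ)` whose upper-right entry is divisible by `d`, and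
`(f ∣ B_d) ∣ γ = (f ∣ B_d γ B_d⁻¹) ∣ B_d`. It maps `Γ0(Nd/q)` into `Γ0(N/q)` and pulls `Γ0(N)` back
to `Γ0(Nd)`, so it induces an injection `Γ0(Nd)\Γ0(Nd/q) → Γ0(N)\Γ0(N/q)`. This is a bijection:
since `d` is coprime to `q`, every coset `Γ0(N) δ` with `δ ∈ Γ0(N/q)` contains a matrix whose
upper-right entry is divisible by `d`. The two traces are therefore sums of the same terms.
-/

def IsRightCosetReps {Γ : Type*} [Group Γ] (K G : Subgroup Γ) (R : Finset Γ) : Prop :=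
  (∀ γ ∈ R, γ ∈ G) ∧ ∀ δ ∈ G, ∃! γ, γ ∈ R ∧ δ * γ⁻¹ ∈ K

namespace IsRightCosetReps

variable {Γ Γ' M : Type*} [Group Γ] [Group Γ'] [AddCommMonoid M]
  {K₁ G₁ : Subgroup Γ} {K₂ G₂ : Subgroup Γ'} {R₁ : Finset Γ} {R₂ : Finset Γ'}

/-- The hypotheses on `φ` say that it induces a bijection `K₁\G₁ ≃ K₂\G₂`. -/
theorem sum_eq_sum_of_monoidHom (h₁ : IsRightCosetReps K₁ G₁ R₁)
    (h₂ : IsRightCosetReps K₂ G₂ R₂) (φ : G₁ →* Γ') (hφG : ∀ γ, φ γ ∈ G₂)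
    (hφK : ∀ γ, φ γ ∈ K₂ ↔ (γ : Γ) ∈ K₁) (hφ_surj : ∀ δ ∈ G₂, ∃ γ, δ * (φ γ)⁻¹ ∈ K₂)
    {F : Γ → M} {g : Γ' → M} (hF : ∀ γ : G₁, F γ = g (φ γ))
    (hg : ∀ κ ∈ K₂, ∀ δ, g (κ * δ) = g δ) :
    ∑ γ ∈ R₁, F γ = ∑ δ ∈ R₂, g δ := by
  choose rep hrep using fun δ hδ => (h₂.2 δ hδ).exists
  refine Finset.sum_bij (fun γ hγ => rep (φ ⟨γ, h₁.1 γ hγ⟩) (hφG _)) (fun γ _ => (hrep _ _).1)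
    ?_ ?_ ?_
  · intro γ₁ hγ₁ γ₂ hγ₂ hrep_eq
    have h₁' := (hrep _ (hφG ⟨γ₁, h₁.1 γ₁ hγ₁⟩)).2
    have h₂' := (hrep _ (hφG ⟨γ₂, h₁.1 γ₂ hγ₂⟩)).2
    rw [hrep_eq] at h₁'
    have hK : φ (⟨γ₁, h₁.1 γ₁ hγ₁⟩ * ⟨γ₂, h₁.1 γ₂ hγ₂⟩⁻¹) ∈ K₂ := by
      simpa [mul_assoc] using mul_mem h₁' (inv_mem h₂')
    exact (h₁.2 γ₁ (h₁.1 γ₁ hγ₁)).unique ⟨hγ₁, by simp⟩ ⟨hγ₂, (hφK _).1 hK⟩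
  · intro r hr
    obtain ⟨γ, hγ⟩ := hφ_surj r (h₂.1 r hr)
    obtain ⟨γ₀, ⟨hγ₀, hγγ₀⟩, -⟩ := h₁.2 γ γ.2
    have hK : φ (γ * ⟨γ₀, h₁.1 γ₀ hγ₀⟩⁻¹) ∈ K₂ := (hφK _).2 hγγ₀
    refine ⟨γ₀, hγ₀, (h₂.2 _ (hφG _)).unique (hrep _ _) ⟨hr, ?_⟩⟩
    simpa [mul_assoc] using inv_mem (mul_mem hγ hK)
  · intro γ hγ
    obtain ⟨-, hκ⟩ := hrep _ (hφG ⟨γ, h₁.1 γ hγ⟩)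
    rw [hF ⟨γ, h₁.1 γ hγ⟩, ← hg _ hκ (rep _ _), inv_mul_cancel_right]

end IsRightCosetReps

theorem Int.exists_isCoprime_add_mul {a b c : ℤ} (hc : c ≠ 0)
    (h : ∀ p : ℤ, Prime p → p ∣ a → p ∣ b → ¬ p ∣ c) : ∃ x, IsCoprime (a + b * x) c := by
  let x : ℤ := ((∏ ℓ ∈ c.natAbs.primeFactors.filter (fun ℓ : ℕ => ¬ (ℓ : ℤ) ∣ a), ℓ : ℕ) : ℤ)
  have dvd_x_iff : ∀ p : ℤ, Prime p → p ∣ c → (p ∣ x ↔ ¬ p ∣ a) := by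
    intro p hp hpc
    have hp' := Int.prime_iff_natAbs_prime.1 hp
    rw [← Int.natAbs_dvd, ← Int.natAbs_dvd (a := p), Int.natCast_dvd_natCast]
    constructor
    · intro hpx
      obtain ⟨ℓ, hℓ, hpℓ⟩ := hp'.prime.exists_mem_finset_dvd hpx
      obtain ⟨hℓ, hℓa⟩ := Finset.mem_filter.1 hℓ
      rwa [(Nat.prime_dvd_prime_iff_eq hp' (Nat.prime_of_mem_primeFactors hℓ)).1 hpℓ]
    · intro hpa
      refine Finset.dvd_prod_of_mem _ (Finset.mem_filter.2 ⟨?_, hpa⟩)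
      exact Nat.mem_primeFactors.2 ⟨hp', Int.natAbs_dvd_natAbs.2 hpc, by simpa using hc⟩
  refine ⟨x, isCoprime_of_prime_dvd (by simp [hc]) fun p hp hpax hpc => ?_⟩
  by_cases hpa : p ∣ a
  · rcases hp.dvd_or_dvd ((dvd_add_right hpa).1 hpax) with hpb | hpx
    · exact h p hp hpa hpb hpc
    · exact (dvd_x_iff p hp hpc).1 hpx hpa
  · exact hpa ((dvd_add_left (((dvd_x_iff p hp hpc).2 hpa).mul_left b)).1 hpax)

theorem Matrix.SpecialLinearGroup.SL2_det_eq_one (γ : SL(2, ℤ)) :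
    γ 0 0 * γ 1 1 - γ 0 1 * γ 1 0 = 1 := by
  rw [← Matrix.det_fin_two]; exact γ.2

namespace CongruenceSubgroup

open Matrix

theorem mem_Gamma0_iff_dvd {N : ℕ} {γ : SL(2, ℤ)} : γ ∈ Gamma0 N ↔ (N : ℤ) ∣ γ 1 0 := by
  rw [Gamma0_mem, ZMod.intCast_zmod_eq_zero_iff_dvd]

theorem Gamma0_le_of_dvd {M N : ℕ} (h : M ∣ N) : Gamma0 N ≤ Gamma0 M := fun _ hγ =>
  mem_Gamma0_iff_dvd.2 ((Int.natCast_dvd_natCast.2 h).trans (mem_Gamma0_iff_dvd.1 hγ))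

theorem exists_mem_Gamma0_dvd_mul_apply_zero_one {M N d : ℕ} (hN : N ≠ 0) (hMN : M ∣ N)
    (hd : d.Coprime (N / M)) {δ : SL(2, ℤ)} (hδ : δ ∈ Gamma0 M) :
    ∃ u ∈ Gamma0 N, (d : ℤ) ∣ (u * δ) 0 1 := by
  by_cases hdb : (d : ℤ) ∣ δ 0 1
  · exact ⟨1, one_mem _, by simpa using hdb⟩
  have hdet := δ.SL2_det_eq_one
  have hb : δ 0 1 ≠ 0 := fun hb => hdb (hb ▸ dvd_zero _)
  obtain ⟨x, s, t, hst⟩ := Int.exists_isCoprime_add_mul (a := δ 1 1) (b := d)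
    (mul_ne_zero hb (Int.natCast_ne_zero.2 hN)) fun p hp hpe hpd hpbN => by
      refine hp.not_isUnit (isUnit_of_dvd_one (hdet ▸ dvd_sub (hpe.mul_left _) ?_))
      rcases hp.dvd_or_dvd hpbN with hpb | hpN
      · exact hpb.mul_right _
      have hpMN : p ∣ (M : ℤ) * (N / M : ℕ) := by rwa [← Nat.cast_mul, Nat.mul_div_cancel' hMN]
      rcases hp.dvd_or_dvd hpMN with hpM | hpNM
      · exact (hpM.trans (mem_Gamma0_iff_dvd.1 hδ)).mul_left _
      · exact absurd ((Nat.isCoprime_iff_coprime.2 hd).isUnit_of_dvd' hpd hpNM) hp.not_isUnit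
  -- The first row of `u` is orthogonal to the second column of `δ` modulo `d`, and it is
  -- coprime to `N * δ 0 1`, so it completes to an element of `Γ0(N)`.
  let u : SL(2, ℤ) := ⟨!![δ 1 1 + d * x, -δ 0 1; N * t, s], by
    rw [det_fin_two_of]; linear_combination hst⟩
  refine ⟨u, mem_Gamma0_iff_dvd.2 (by simp [u]), ⟨x * δ 0 1, ?_⟩⟩
  rw [Matrix.SpecialLinearGroup.coe_mul]
  simp only [u, mul_apply, Fin.sum_univ_two, of_apply, cons_val', cons_val_zero, cons_val_one,
    cons_val_fin_one, neg_mul]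
  ring

/-- `γ ↦ B_d γ B_d⁻¹`, for `B_d = diag(d, 1)`. -/
def conjBd (d : ℕ) : Gamma0 d →* SL(2, ℤ) where
  toFun γ := ⟨!![γ.1 0 0, γ.1 0 1 * d; γ.1 1 0 / d, γ.1 1 1], by
    rw [det_fin_two_of, mul_assoc, Int.mul_ediv_cancel' (mem_Gamma0_iff_dvd.1 γ.2)]
    exact γ.1.SL2_det_eq_one⟩
  map_one' := by
    ext i j
    fin_cases i <;> fin_cases j <;> simp
  map_mul' γ γ' := by
    have hc := mem_Gamma0_iff_dvd.1 γ.2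
    have hc' := mem_Gamma0_iff_dvd.1 γ'.2
    apply Subtype.ext
    change _ = (_ : Matrix (Fin 2) (Fin 2) ℤ) * _
    simp only [Subgroup.coe_mul, Matrix.SpecialLinearGroup.coe_mul, Matrix.mul_fin_two]
    ext i j
    fin_cases i <;> fin_cases j <;>
      simp only [mul_apply, Fin.sum_univ_two, Fin.zero_eta, Fin.mk_one, of_apply, cons_val',
        cons_val_zero, cons_val_one, cons_val_fin_one, add_left_inj, add_right_inj]
    · rw [mul_assoc, Int.mul_ediv_cancel' hc']
    · ring
    · rw [Int.add_ediv_of_dvd_right (hc'.mul_left _), Int.mul_ediv_assoc' _ hc,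
        Int.mul_ediv_assoc _ hc']
    · rw [mul_comm (γ'.1 0 1), ← mul_assoc, Int.ediv_mul_cancel hc]

variable {d : ℕ}

@[simp]
theorem coe_conjBd (γ : Gamma0 d) : (conjBd d γ : Matrix (Fin 2) (Fin 2) ℤ) =
    !![γ.1 0 0, γ.1 0 1 * d; γ.1 1 0 / d, γ.1 1 1] :=
  rfl

theorem conjBd_mem_Gamma0_iff (hd : d ≠ 0) {M : ℕ} (γ : Gamma0 d) :
    conjBd d γ ∈ Gamma0 M ↔ (γ : SL(2, ℤ)) ∈ Gamma0 (M * d) := by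
  obtain ⟨c, hc⟩ := mem_Gamma0_iff_dvd.1 γ.2
  have hd' : (d : ℤ) ≠ 0 := Int.natCast_ne_zero.2 hd
  rw [mem_Gamma0_iff_dvd, mem_Gamma0_iff_dvd]
  simp [hc, mul_comm (M : ℤ), mul_dvd_mul_iff_left hd']

theorem exists_conjBd_eq (hd : d ≠ 0) {w : SL(2, ℤ)} (hw : (d : ℤ) ∣ w 0 1) :
    ∃ γ, conjBd d γ = w := by
  have hd' : (d : ℤ) ≠ 0 := Int.natCast_ne_zero.2 hd
  let γ : SL(2, ℤ) := ⟨!![w 0 0, w 0 1 / d; w 1 0 * d, w 1 1], by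
    rw [det_fin_two_of, mul_comm (w 1 0), ← mul_assoc, Int.ediv_mul_cancel hw]
    exact w.SL2_det_eq_one⟩
  refine ⟨⟨γ, mem_Gamma0_iff_dvd.2 (by simp [γ])⟩, ?_⟩
  ext i j
  fin_cases i <;> fin_cases j <;> simp [γ, Int.ediv_mul_cancel hw, Int.mul_ediv_cancel _ hd']

theorem exists_conjBd_mul_inv_mem_Gamma0 {M N : ℕ} (hd : d ≠ 0) (hN : N ≠ 0) (hMN : M ∣ N)
    (hcop : d.Coprime (N / M)) {δ : SL(2, ℤ)} (hδ : δ ∈ Gamma0 M) :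
    ∃ γ : Gamma0 d, (γ : SL(2, ℤ)) ∈ Gamma0 (M * d) ∧ δ * (conjBd d γ)⁻¹ ∈ Gamma0 N := by
  obtain ⟨u, hu, hdu⟩ := exists_mem_Gamma0_dvd_mul_apply_zero_one hN hMN hcop hδ
  obtain ⟨γ, hγ⟩ := exists_conjBd_eq hd hdu
  refine ⟨γ, (conjBd_mem_Gamma0_iff hd γ).1 ?_, ?_⟩
  · rw [hγ]
    exact mul_mem (Gamma0_le_of_dvd hMN hu) hδ
  · rw [hγ, _root_.mul_inv_rev, mul_inv_cancel_left]
    exact inv_mem hu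

end CongruenceSubgroup

open CongruenceSubgroup

@[simp]
theorem coe_scaleH (t : ℝ) (ht : 0 < t) (z : ℍ) : (scaleH t ht z : ℂ) = t * z :=
  rfl

section SlashBd

variable {d : ℕ} (hd : 0 < d)

theorem denom_conjBd_scaleH (γ : Gamma0 d) (z : ℍ) :
    denom (conjBd d γ) (scaleH d (by exact_mod_cast hd) z) = denom γ z := by
  have hc : ((γ.1 1 0 / d : ℤ) : ℂ) * d = γ.1 1 0 := by
    exact_mod_cast Int.ediv_mul_cancel (mem_Gamma0_iff_dvd.1 γ.2)
  rw [ModularGroup.denom_apply, ModularGroup.denom_apply]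
  simp only [coe_conjBd, coe_scaleH, Matrix.of_apply, Matrix.cons_val', Matrix.cons_val_zero,
    Matrix.cons_val_one, Matrix.cons_val_fin_one, ofReal_natCast, add_left_inj]
  linear_combination (z : ℂ) * hc

theorem scaleH_smul (γ : Gamma0 d) (z : ℍ) :
    scaleH d (by exact_mod_cast hd) ((γ : SL(2, ℤ)) • z) =
      conjBd d γ • scaleH d (by exact_mod_cast hd) z := by
  have hc : ((γ.1 1 0 / d : ℤ) : ℂ) * d = γ.1 1 0 := by
    exact_mod_cast Int.ediv_mul_cancel (mem_Gamma0_iff_dvd.1 γ.2)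
  apply UpperHalfPlane.ext
  simp only [coe_scaleH, UpperHalfPlane.coe_specialLinearGroup_apply]
  simp only [coe_conjBd, Matrix.of_apply, Matrix.cons_val', Matrix.cons_val_zero,
    Matrix.cons_val_one, Matrix.cons_val_fin_one, algebraMap_int_eq, eq_intCast, Int.cast_mul,
    Int.cast_natCast, ofReal_mul, ofReal_intCast, ofReal_natCast]
  rw [show ((γ.1 1 0 / d : ℤ) : ℂ) * (d * z) = γ.1 1 0 * z by linear_combination (z : ℂ) * hc]
  ring

theorem slashBd_slash (k : ℕ) (f : ℍ → ℂ) (γ : Gamma0 d) :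
    slashBd d hd k f ∣[(k : ℤ)] (γ : SL(2, ℤ)) = slashBd d hd k (f ∣[(k : ℤ)] conjBd d γ) := by
  ext z
  simp only [ModularForm.SL_slash_apply, slashBd, scaleH_smul hd, denom_conjBd_scaleH hd]
  ring

end SlashBd

theorem IsGamma0Reps.isRightCosetReps {N M : ℕ} {R : Finset SL(2, ℤ)} (h : IsGamma0Reps N M R) :
    IsRightCosetReps (Gamma0 N) (Gamma0 M) R :=
  h

theorem slashBd_sum {ι : Type*} (d : ℕ) (hd : 0 < d) (k : ℕ) (s : Finset ι) (F : ι → ℍ → ℂ) :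
    slashBd d hd k (∑ i ∈ s, F i) = ∑ i ∈ s, slashBd d hd k (F i) := by
  ext z
  simp [slashBd, Finset.sum_apply, Finset.mul_sum]

theorem statement9_general (k N d q : ℕ) (hN : 0 < N) (hd : 0 < d)
    (hqN : q ∣ N) (hdq : Nat.gcd d q = 1)
    (f : UpperHalfPlane → ℂ) (hf : IsCuspForm N (k : ℤ) f)
    (R₁ R₂ : Finset SL(2, ℤ))
    (h₁ : IsGamma0Reps (N * d) (N * d / q) R₁) (h₂ : IsGamma0Reps N (N / q) R₂) :
    ∑ γ ∈ R₁, (slashBd d hd k f) ∣[(k : ℤ)] γ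
      = slashBd d hd k (∑ γ ∈ R₂, f ∣[(k : ℤ)] γ) := by
  obtain ⟨F, rfl⟩ := hf
  have hNd : N * d / q = N / q * d := (Nat.div_mul_right_comm hqN d).symm
  have hle : Gamma0 (N * d / q) ≤ Gamma0 d := by
    rw [hNd]; exact Gamma0_le_of_dvd (dvd_mul_left d _)
  rw [slashBd_sum]
  refine h₁.isRightCosetReps.sum_eq_sum_of_monoidHom h₂.isRightCosetReps
    (g := fun δ => slashBd d hd k (F ∣[(k : ℤ)] δ))
    ((conjBd d).comp (Subgroup.inclusion hle)) (fun γ => ?_) (fun γ => ?_) (fun δ hδ => ?_)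
    (fun γ => slashBd_slash hd k _ (Subgroup.inclusion hle γ)) (fun κ hκ δ => ?_)
  · exact (conjBd_mem_Gamma0_iff hd.ne' _).2 (hNd ▸ γ.2)
  · exact conjBd_mem_Gamma0_iff hd.ne' _
  · obtain ⟨γ, hγM, hγ⟩ := exists_conjBd_mul_inv_mem_Gamma0 hd.ne' hN.ne'
      (Nat.div_dvd_of_dvd hqN) (by rwa [Nat.div_div_self hqN hN.ne']) hδ
    exact ⟨⟨γ, hNd ▸ hγM⟩, hγ⟩
  · have hFκ : ⇑F ∣[(k : ℤ)] κ = F :=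
      SlashInvariantForm.slash_action_eqn F κ (Subgroup.mem_map_of_mem _ hκ)
    simp only [SlashAction.slash_mul, hFκ]

/-- Let `q` be a prime dividing `N` and `d` a positive integer coprime to `q`.  For any cusp
form `f` of weight `k` for `Γ0(N)`: `Tr^{Nd}_{Nd/q}(f∣[k]B_d) = (Tr^N_{N/q}(f))∣[k]B_d`,
traces being computed with any choices of coset representatives. -/
theorem statement9 (k N d q : ℕ) (hk : 0 < k) (hN : 0 < N) (hd : 0 < d)
    (hq : q.Prime) (hqN : q ∣ N) (hdq : Nat.gcd d q = 1)
    (f : UpperHalfPlane → ℂ) (hf : IsCuspForm N (k : ℤ) f)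
    (R₁ R₂ : Finset SL(2, ℤ))
    (h₁ : IsGamma0Reps (N * d) (N * d / q) R₁) (h₂ : IsGamma0Reps N (N / q) R₂) :
    ∑ γ ∈ R₁, (slashBd d hd k f) ∣[(k : ℤ)] γ
      = slashBd d hd k (∑ γ ∈ R₂, f ∣[(k : ℤ)] γ) :=
  statement9_general k N d q hN hd hqN hdq f hf R₁ R₂ h₁ h₂
end

section
/- Let M, N, k be positive integers with M ∣ N, let g be a cusp form of weight k for Γ0(N), let μ = [Γ0(M) : Γ0(N)] be the (finite) index, and let i be an integer with 1 ≤ i ≤ μ. For any finite set R ⊂ Γ0(M) of representatives of the right cosets Γ0(N)\Γ0(M), define s_i(g)(z) to be the i-th elementary symmetric polynomial evaluated at the μ complex numbers (g∣[k]γ)(z), γ ∈ R. Then s_i(g) does not depend on the choice of R, and s_i(g) is a cusp form of weight k·i for Γ0(M). -/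
open Complex UpperHalfPlane
open scoped MatrixGroups ModularForm Manifold

/-- `s_i(g)` computed from the set `R` of coset representatives: the `i`-th elementary
symmetric polynomial of the values `(g∣[k]γ)(z)`, `γ ∈ R`. -/
noncomputable def symCoeff (k : ℤ) (g : UpperHalfPlane → ℂ) (R : Finset SL(2, ℤ)) (i : ℕ) :
    UpperHalfPlane → ℂ :=
  fun z => (R.val.map fun γ => (g ∣[k] γ) z).esymm i

/-!
For `A ∈ Γ0(M)` the map `γ ↦ γA` permutes the right cosets `Γ0(N)\Γ0(M)`, and `g ∣[k] γ` only
depends on the coset of `γ`; hence the multiset of functions `g ∣[k] γ`, `γ ∈ R`, is independent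
of `R` and is permuted by `∣[k] A`. Since `∣[k] A` is multiplicative (for determinant one),
`s_i(g) ∣[k i] A` is the `i`-th elementary symmetric function of that permuted multiset, i.e.
`s_i(g)` again. Holomorphy and vanishing at the cusps pass to sums of nonempty products.
-/

open CongruenceSubgroup

theorem Filter.ZeroAtFilter.esymm_map {α ι R : Type*} [CommSemiring R] [TopologicalSpace R]
    [IsTopologicalSemiring R] {l : Filter α} {s : Finset ι} {f : ι → α → R}
    (hf : ∀ j ∈ s, Filter.ZeroAtFilter l (f j)) {i : ℕ} (hi : i ≠ 0) :
    Filter.ZeroAtFilter l ((s.val.map f).esymm i) := by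
  rw [Finset.esymm_map_val, Filter.ZeroAtFilter, Finset.sum_fn, ← Finset.sum_const_zero]
  refine tendsto_finsetSum _ fun t ht => ?_
  have hcard : t.card ≠ 0 := by rwa [(Finset.mem_powersetCard.1 ht).2]
  rw [Finset.prod_fn, ← zero_pow hcard, ← Finset.prod_const]
  exact tendsto_finsetProd _ fun j hj => hf j ((Finset.mem_powersetCard.1 ht).1 hj)

theorem MDifferentiable.esymm_map {𝕜 : Type*} [NontriviallyNormedField 𝕜]
    {E : Type*} [NormedAddCommGroup E] [NormedSpace 𝕜 E] {H : Type*} [TopologicalSpace H]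
    {I : ModelWithCorners 𝕜 E H} {M : Type*} [TopologicalSpace M] [ChartedSpace H M]
    {F : Type*} [NormedCommRing F] [NormedAlgebra 𝕜 F] {ι : Type} {s : Finset ι}
    {f : ι → M → F} (hf : ∀ j ∈ s, MDifferentiable I 𝓘(𝕜, F) (f j)) (i : ℕ) :
    MDifferentiable I 𝓘(𝕜, F) ((s.val.map f).esymm i) := by
  rw [Finset.esymm_map_val]
  exact .sum fun t ht => .prod fun j hj => hf j ((Finset.mem_powersetCard.1 ht).1 hj)

namespace ModularForm

theorem prod_slash_SL2 {ι : Type*} (k : ℤ) (A : SL(2, ℤ)) (f : ι → ℍ → ℂ) (s : Finset ι) :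
    (∏ j ∈ s, f j) ∣[k * s.card] A = ∏ j ∈ s, f j ∣[k] A := by
  simp [SL_slash, prod_slash]

theorem esymm_map_slash_SL2 {ι : Type*} (k : ℤ) (A : SL(2, ℤ)) (f : ι → ℍ → ℂ) (s : Finset ι)
    (i : ℕ) : (s.val.map f).esymm i ∣[k * i] A = (s.val.map (f · ∣[k] A)).esymm i := by
  rw [Finset.esymm_map_val, Finset.esymm_map_val, SlashAction.sum_slash]
  refine Finset.sum_congr rfl fun t ht => ?_
  rw [← (Finset.mem_powersetCard.1 ht).2, prod_slash_SL2]

end ModularForm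

theorem CuspForm.exists_coe_eq_of_forall_slash_SL2 {Γ : Subgroup SL(2, ℤ)} [Γ.FiniteIndex]
    {k : ℤ} {f : ℍ → ℂ} (hinv : ∀ γ ∈ Γ, f ∣[k] γ = f) (hf : MDifferentiable 𝓘(ℂ) 𝓘(ℂ) f)
    (hzero : ∀ A : SL(2, ℤ), IsZeroAtImInfty (f ∣[k] A)) :
    ∃ F : CuspForm Γ k, ⇑F = f := by
  refine ⟨⟨⟨f, ?_⟩, hf, fun hc => ?_⟩, rfl⟩
  · rintro _ ⟨γ, hγ, rfl⟩
    exact hinv γ hγ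
  · rw [Subgroup.IsArithmetic.isCusp_iff_isCusp_SL2Z] at hc
    exact (OnePoint.isZeroAt_iff_forall_SL2Z hc).2 fun A _ => hzero A

namespace IsGamma0Reps

variable {N M : ℕ} {R R' : Finset SL(2, ℤ)}

theorem eq_of_mul_inv_mem (hR : IsGamma0Reps N M R) {a b : SL(2, ℤ)} (ha : a ∈ R) (hb : b ∈ R)
    (hab : a * b⁻¹ ∈ Gamma0 N) : a = b := by
  obtain ⟨γ, -, huniq⟩ := hR.2 a (hR.1 a ha)
  exact (huniq a ⟨ha, by simp⟩).trans (huniq b ⟨hb, hab⟩).symm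

theorem map_slash_mul_eq (hR : IsGamma0Reps N M R) (hR' : IsGamma0Reps N M R') {k : ℤ}
    {g : ℍ → ℂ} (hg : ∀ γ ∈ Gamma0 N, g ∣[k] γ = g) {A : SL(2, ℤ)} (hA : A ∈ Gamma0 M) :
    R.val.map (fun γ => g ∣[k] (γ * A)) = R'.val.map (g ∣[k] ·) := by
  have hRA : ∀ a ∈ R, a * A ∈ Gamma0 M := fun a ha => mul_mem (hR.1 a ha) hA
  choose rep hrep hrep_unique using fun a (ha : a ∈ R) => hR'.2 (a * A) (hRA a ha)
  refine Multiset.map_eq_map_of_bij_of_nodup _ _ R.nodup R'.nodup rep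
    (fun a ha => (hrep a ha).1) (fun a₁ ha₁ a₂ ha₂ h => ?_) (fun b hb => ?_) (fun a ha => ?_)
  · refine hR.eq_of_mul_inv_mem ha₁ ha₂ ?_
    have := mul_mem (hrep a₁ ha₁).2 (inv_mem (h ▸ (hrep a₂ ha₂).2))
    simpa [mul_assoc] using this
  · obtain ⟨a, ⟨ha, hba⟩, -⟩ := hR.2 (b * A⁻¹) (mul_mem (hR'.1 b hb) (inv_mem hA))
    refine ⟨a, ha, (hrep_unique a ha b ⟨hb, ?_⟩).symm⟩
    simpa [mul_assoc] using inv_mem hba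
  · calc g ∣[k] (a * A) = g ∣[k] ((a * A * (rep a ha)⁻¹) * rep a ha) := by group
      _ = g ∣[k] rep a ha := by rw [SlashAction.slash_mul, hg _ (hrep a ha).2]

end IsGamma0Reps

theorem symCoeff_eq_esymm (k : ℤ) (g : ℍ → ℂ) (R : Finset SL(2, ℤ)) (i : ℕ) :
    symCoeff k g R i = (R.val.map (g ∣[k] ·)).esymm i := by
  funext z
  simp only [symCoeff, Finset.esymm_map_val, Finset.sum_apply, Finset.prod_apply]

theorem symCoeff_slash (k : ℤ) (g : ℍ → ℂ) (R : Finset SL(2, ℤ)) (i : ℕ) (A : SL(2, ℤ)) :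
    symCoeff k g R i ∣[k * i] A = (R.val.map fun γ => g ∣[k] (γ * A)).esymm i := by
  simp only [symCoeff_eq_esymm, ModularForm.esymm_map_slash_SL2, SlashAction.slash_mul]

section symCoeff

variable {k : ℤ} {g : ℍ → ℂ} {N M : ℕ} {R R' : Finset SL(2, ℤ)} {i : ℕ}

theorem symCoeff_slash_of_mem_Gamma0 (hg : ∀ γ ∈ Gamma0 N, g ∣[k] γ = g)
    (hR : IsGamma0Reps N M R) (hR' : IsGamma0Reps N M R') {A : SL(2, ℤ)} (hA : A ∈ Gamma0 M) :
    symCoeff k g R i ∣[k * i] A = symCoeff k g R' i := by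
  rw [symCoeff_slash, hR.map_slash_mul_eq hR' hg hA, symCoeff_eq_esymm]

theorem symCoeff_eq_of_isGamma0Reps (hg : ∀ γ ∈ Gamma0 N, g ∣[k] γ = g)
    (hR : IsGamma0Reps N M R) (hR' : IsGamma0Reps N M R') :
    symCoeff k g R i = symCoeff k g R' i := by
  simpa only [SlashAction.slash_one] using symCoeff_slash_of_mem_Gamma0 hg hR hR' (one_mem _)

end symCoeff

theorem statement10_general (k M N : ℕ) (hM : 0 < M) (hN : 0 < N)
    (g : UpperHalfPlane → ℂ) (hg : IsCuspForm N (k : ℤ) g)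
    (i : ℕ) (hi1 : 1 ≤ i) :
    (∀ R R' : Finset SL(2, ℤ), IsGamma0Reps N M R → IsGamma0Reps N M R' →
      symCoeff (k : ℤ) g R i = symCoeff (k : ℤ) g R' i) ∧
    (∀ R : Finset SL(2, ℤ), IsGamma0Reps N M R →
      IsCuspForm M ((k : ℤ) * (i : ℤ)) (symCoeff (k : ℤ) g R i)) := by
  obtain ⟨F, rfl⟩ := hg
  have : NeZero M := ⟨hM.ne'⟩
  have : NeZero N := ⟨hN.ne'⟩
  have hinv : ∀ γ ∈ Gamma0 N, ⇑F ∣[(k : ℤ)] γ = ⇑F := fun γ hγ =>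
    F.slash_action_eq' _ (Subgroup.mem_map_of_mem _ hγ)
  refine ⟨fun R R' hR hR' => symCoeff_eq_of_isGamma0Reps hinv hR hR', fun R hR => ?_⟩
  refine CuspForm.exists_coe_eq_of_forall_slash_SL2
    (fun A hA => symCoeff_slash_of_mem_Gamma0 hinv hR hR hA) ?_ fun A => ?_
  · rw [symCoeff_eq_esymm]
    exact .esymm_map (fun γ _ => F.holo'.slash k (Matrix.SpecialLinearGroup.mapGL ℝ γ)) i
  · rw [symCoeff_slash]
    exact .esymm_map (fun γ _ => CuspFormClass.zero_at_infty_slash F (γ * A))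
      (Nat.one_le_iff_ne_zero.1 hi1)

/-- Let `M ∣ N`, let `g` be a cusp form of weight `k` for `Γ0(N)`, let
`μ = [Γ0(M) : Γ0(N)]`, and let `1 ≤ i ≤ μ`.  Then the `i`-th elementary symmetric
polynomial `s_i(g)` of the `μ` functions `g∣[k]γ`, `γ` ranging over a set of
representatives of `Γ0(N)\Γ0(M)`, does not depend on the choice of representatives,
and `s_i(g)` is a cusp form of weight `k·i` for `Γ0(M)`. -/
theorem statement10 (k M N : ℕ) (hk : 0 < k) (hM : 0 < M) (hN : 0 < N) (hMN : M ∣ N)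
    (g : UpperHalfPlane → ℂ) (hg : IsCuspForm N (k : ℤ) g)
    (i : ℕ) (hi1 : 1 ≤ i)
    (hiμ : i ≤ (CongruenceSubgroup.Gamma0 N).relIndex (CongruenceSubgroup.Gamma0 M)) :
    (∀ R R' : Finset SL(2, ℤ), IsGamma0Reps N M R → IsGamma0Reps N M R' →
      symCoeff (k : ℤ) g R i = symCoeff (k : ℤ) g R' i) ∧
    (∀ R : Finset SL(2, ℤ), IsGamma0Reps N M R →
      IsCuspForm M ((k : ℤ) * (i : ℤ)) (symCoeff (k : ℤ) g R i)) :=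
  statement10_general k M N hM hN g hg i hi1
end
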